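/- arXiv:2204.05596 — 3 statements merged into one kernel-verified Lean document; each statement's English description precedes it below -/
import Mathlib

section
/- Let a ≥ 0, b ≥ 0, and 0 < r < 1, with the additional assumption that a = 0 implies b = 0. Then the function f(x) = (b + x²)/(a + x)^r is strictly convex on (0, 1]. -/
/-!
With `t = a + x` the function is `t ^ (2 - r) - 2 a t ^ (1 - r) + (a² + b) t ^ (-r)`:
a strictly convex power, minus a nonnegative multiple of a concave power, plus a nonnegative
multiple of a convex power.
-/

open Set

lemma convexOn_rpow_of_nonpos {p : ℝ} (hp : p ≤ 0) : ConvexOn ℝ (Ioi 0) fun x : ℝ ↦ x ^ p := by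
  have hdiff : DifferentiableOn ℝ (fun x : ℝ ↦ x ^ p) (Ioi 0) := fun x hx ↦
    (Real.differentiableAt_rpow_const_of_ne p (ne_of_gt hx)).differentiableWithinAt
  refine MonotoneOn.convexOn_of_deriv (convex_Ioi 0) hdiff.continuousOn
    (hdiff.mono interior_subset) ?_
  rw [interior_Ioi, Real.deriv_rpow_const']
  intro x hx y _ hxy
  exact mul_le_mul_of_nonpos_left (Real.rpow_le_rpow_of_nonpos hx hxy (by linarith)) hp

lemma strictConvexOn_rpow_two_sub_sub_add_rpow_neg {a c r : ℝ} (ha : 0 ≤ a) (hc : 0 ≤ c)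
    (hr : 0 ≤ r) (hr1 : r < 1) :
    StrictConvexOn ℝ (Ioi 0) fun t : ℝ ↦ t ^ (2 - r) - 2 * a * t ^ (1 - r) + c * t ^ (-r) := by
  have hsq : StrictConvexOn ℝ (Ioi 0) fun t : ℝ ↦ t ^ (2 - r) :=
    (strictConvexOn_rpow (by linarith)).subset Ioi_subset_Ici_self (convex_Ioi 0)
  have hmid : ConcaveOn ℝ (Ioi 0) fun t : ℝ ↦ 2 * a * t ^ (1 - r) :=
    ((Real.concaveOn_rpow (by linarith) (by linarith)).subset Ioi_subset_Ici_self
      (convex_Ioi 0)).smul (by positivity : 0 ≤ 2 * a)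
  have hneg : ConvexOn ℝ (Ioi 0) fun t : ℝ ↦ c * t ^ (-r) :=
    (convexOn_rpow_of_nonpos (neg_nonpos.mpr hr)).smul hc
  exact ((hsq.add_convexOn hmid.neg).add_convexOn hneg).congr fun t _ ↦ by
    simp only [Pi.add_apply, Pi.neg_apply, sub_eq_add_neg]

lemma add_sq_div_rpow_eq {a b r x : ℝ} (hx : 0 < a + x) :
    (b + x ^ 2) / (a + x) ^ r
      = (a + x) ^ (2 - r) - 2 * a * (a + x) ^ (1 - r) + (a ^ 2 + b) * (a + x) ^ (-r) := by
  rw [Real.rpow_sub hx, Real.rpow_sub hx, Real.rpow_two, Real.rpow_one, Real.rpow_neg hx.le]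
  field_simp
  ring

theorem stmt_7_general (a b r : ℝ) (ha : 0 ≤ a) (hb : 0 ≤ b) (hr : 0 < r) (hr1 : r < 1) :
    StrictConvexOn ℝ (Set.Ioc (0 : ℝ) 1)
      (fun x => (b + x ^ 2) / (a + x) ^ r) := by
  have hdom : Ioc (0 : ℝ) 1 ⊆ (fun x ↦ a + x) ⁻¹' Ioi 0 :=
    fun x hx ↦ show 0 < a + x by linarith [hx.1]
  have hexp := strictConvexOn_rpow_two_sub_sub_add_rpow_neg ha
    (by positivity : 0 ≤ a ^ 2 + b) hr.le hr1
  exact ((hexp.translate_right a).subset hdom (convex_Ioc 0 1)).congr fun x hx ↦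
    (add_sq_div_rpow_eq (hdom hx)).symm

theorem stmt_7 (a b r : ℝ) (ha : 0 ≤ a) (hb : 0 ≤ b) (hr : 0 < r) (hr1 : r < 1)
    (hab : a = 0 → b = 0) :
    StrictConvexOn ℝ (Set.Ioc (0 : ℝ) 1)
      (fun x => (b + x ^ 2) / (a + x) ^ r) :=
  stmt_7_general a b r ha hb hr hr1
end

section
/- Let P' ∈ ℝ^{B×C} be a row-stochastic non-negative matrix, fix a row index k, let c* = argmin_d Σ_{i≠k} P'_{id}, and let P* be obtained from P' by replacing row k with the one-hot vector e_{c*}. Then Σ_{i≠j} Σ_c P*_{ic} P*_{jc} ≤ Σ_{i≠j} Σ_c P'_{ic} P'_{jc}. -/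
/-!
Only the pairs containing row `k` see that row, and together they contribute
`2 ∑_c P_{kc} g_c`, where `g` is the vector of column sums over the other rows.
Replacing row `k` by any vector `v` therefore changes the objective by
`2 (∑_c v_c g_c - ∑_c P_{kc} g_c)`. For `v = e_{c*}` the new term is `g_{c*} = min g`,
which is at most the average `∑_c P_{kc} g_c` of `g` against the probability vector `P_k`.
-/

open Finset

section PairSum

variable {ι κ R : Type*} [Fintype ι] [DecidableEq ι] [Fintype κ]

theorem sum_sum_erase_eq_add_sum_erase_erase [AddCommMonoid R] (F : ι → ι → R) (k : ι) :
    ∑ i, ∑ j ∈ univ.erase i, F i j =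
      ∑ j ∈ univ.erase k, (F k j + F j k) +
        ∑ i ∈ univ.erase k, ∑ j ∈ (univ.erase i).erase k, F i j := by
  have hrow : ∀ i ∈ univ.erase k,
      ∑ j ∈ univ.erase i, F i j = F i k + ∑ j ∈ (univ.erase i).erase k, F i j := fun i hi =>
    (add_sum_erase _ _ (mem_erase.2 ⟨(ne_of_mem_erase hi).symm, mem_univ k⟩)).symm
  rw [← add_sum_erase _ _ (mem_univ k), sum_congr rfl hrow, sum_add_distrib,
    sum_add_distrib]
  abel

def offRowPairSum [CommSemiring R] (M : ι → κ → R) (k : ι) : R :=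
  ∑ i ∈ univ.erase k, ∑ j ∈ (univ.erase i).erase k, ∑ c, M i c * M j c

theorem offRowPairSum_update [CommSemiring R] (M : ι → κ → R) (k : ι) (v : κ → R) :
    offRowPairSum (Function.update M k v) k = offRowPairSum M k := by
  refine sum_congr rfl fun i hi => sum_congr rfl fun j hj => ?_
  rw [Function.update_of_ne (ne_of_mem_erase hi), Function.update_of_ne (ne_of_mem_erase hj)]

theorem sum_pairs_eq_two_mul_add_offRowPairSum [CommSemiring R] (M : ι → κ → R) (k : ι) :
    ∑ i, ∑ j ∈ univ.erase i, ∑ c, M i c * M j c =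
      2 * ∑ c, M k c * ∑ i ∈ univ.erase k, M i c + offRowPairSum M k := by
  rw [sum_sum_erase_eq_add_sum_erase_erase _ k, offRowPairSum]
  congr 1
  simp_rw [mul_sum]
  conv_rhs => rw [sum_comm]
  exact sum_congr rfl fun j _ => by rw [← sum_add_distrib]; exact sum_congr rfl fun c _ => by ring

theorem sum_pairs_update_le [CommSemiring R] [PartialOrder R] [IsOrderedRing R]
    (M : ι → κ → R) (k : ι) (v : κ → R)
    (hv : ∑ c, v c * ∑ i ∈ univ.erase k, M i c ≤ ∑ c, M k c * ∑ i ∈ univ.erase k, M i c) :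
    ∑ i, ∑ j ∈ univ.erase i, ∑ c, Function.update M k v i c * Function.update M k v j c ≤
      ∑ i, ∑ j ∈ univ.erase i, ∑ c, M i c * M j c := by
  have hcol : ∀ c, ∑ i ∈ univ.erase k, Function.update M k v i c = ∑ i ∈ univ.erase k, M i c :=
    fun c => sum_congr rfl fun i hi => by rw [Function.update_of_ne (ne_of_mem_erase hi)]
  rw [sum_pairs_eq_two_mul_add_offRowPairSum _ k, sum_pairs_eq_two_mul_add_offRowPairSum M k,
    offRowPairSum_update]
  simp only [Function.update_self, hcol]
  gcongr
  exact zero_le_two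

end PairSum

theorem le_sum_mul_of_le {κ R : Type*} [Fintype κ] [CommSemiring R] [PartialOrder R]
    [IsOrderedRing R] {w g : κ → R} (hw : ∀ c, 0 ≤ w c) (hsum : ∑ c, w c = 1) {a : R}
    (ha : ∀ c, a ≤ g c) : a ≤ ∑ c, w c * g c :=
  calc a = ∑ c, w c * a := by rw [← sum_mul, hsum, one_mul]
    _ ≤ ∑ c, w c * g c := sum_le_sum fun c _ => mul_le_mul_of_nonneg_left (ha c) (hw c)

theorem stmt_11 {B C : ℕ} (P' : Matrix (Fin B) (Fin C) ℝ)
    (hpos : ∀ i c, 0 ≤ P' i c) (hrow : ∀ i, ∑ c, P' i c = 1)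
    (k : Fin B) (cstar : Fin C)
    (hcstar : ∀ d : Fin C, ∑ i ∈ Finset.univ.erase k, P' i cstar ≤
      ∑ i ∈ Finset.univ.erase k, P' i d)
    (Pstar : Matrix (Fin B) (Fin C) ℝ)
    (hPstar : Pstar = Function.update P' k (fun c => if c = cstar then 1 else 0)) :
    ∑ i, ∑ j ∈ Finset.univ.erase i, ∑ c, Pstar i c * Pstar j c ≤
      ∑ i, ∑ j ∈ Finset.univ.erase i, ∑ c, P' i c * P' j c := by
  subst hPstar
  refine sum_pairs_update_le P' k _ ?_
  simp only [ite_mul, one_mul, zero_mul, sum_ite_eq', mem_univ, if_true]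
  exact le_sum_mul_of_le (hpos k) (hrow k) hcstar
end

section
/- For a row-stochastic matrix P ∈ ℝ^{B×C} with one-hot rows, ‖P‖_* = C · CWS(P)|_{r=1/2}, where CWS(P) = (1/C) Σ_{c=1}^C (Σ_i P_{ic}²)/(Σ_i P_{ic})^{1/2} (with the convention that a class term is 0 when its class size is 0). -/
open Finset Matrix

/-- A vector is one-hot if it equals some standard basis vector. -/
def IsOneHot {C : ℕ} (v : Fin C → ℝ) : Prop :=
  ∃ c : Fin C, v = fun d => if d = c then 1 else 0

/-- The nuclear norm of a real matrix: `Tr √(Pᴴ P)`, the sum of singular values. -/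
noncomputable def nuclearNorm {B C : ℕ} (P : Matrix (Fin B) (Fin C) ℝ) : ℝ :=
  ((Matrix.posSemidef_conjTranspose_mul_self P).1.eigenvectorUnitary.1 *
    diagonal ((RCLike.ofReal : ℝ → ℝ) ∘ (√·) ∘ (Matrix.posSemidef_conjTranspose_mul_self P).1.eigenvalues) *
    (star (Matrix.posSemidef_conjTranspose_mul_self P).1.eigenvectorUnitary :
      Matrix (Fin C) (Fin C) ℝ)).trace

/-- The class weighted squares objective with parameter `r`
(with the convention `0 / 0 = 0` when a class size vanishes). -/
noncomputable def CWS {B C : ℕ} (r : ℝ) (P : Matrix (Fin B) (Fin C) ℝ) : ℝ :=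
  (1 / C) * ∑ c, (∑ i, (P i c) ^ 2) / (∑ i, P i c) ^ r

/-! For one-hot rows, distinct columns of `P` have disjoint supports and `0/1` entries, so
`Pᴴ P = diag(n_c)` with `n_c` the class sizes; the singular values of `P` are therefore the `√n_c`.
At `r = 1/2` each CWS term is `n_c / √n_c = √n_c`, also for `n_c = 0` since `x / √x = √x` holds
for every real `x` under Lean's conventions. -/

namespace Matrix.IsHermitian

variable {𝕜 n : Type*} [RCLike 𝕜] [Fintype n] [DecidableEq n] {A : Matrix n n 𝕜}

theorem trace_cfc (hA : A.IsHermitian) (f : ℝ → ℝ) :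
    (hA.cfc f).trace = ∑ i, (f (hA.eigenvalues i) : 𝕜) := by
  rw [IsHermitian.cfc, Unitary.conjStarAlgAut_apply, trace_mul_comm, ← mul_assoc,
    Unitary.coe_star_mul_self, one_mul, trace_diagonal]
  rfl

theorem map_eigenvalues_of_eq_diagonal (hA : A.IsHermitian) {d : n → ℝ}
    (hAd : A = diagonal fun i => (d i : 𝕜)) :
    univ.val.map hA.eigenvalues = univ.val.map d := by
  have hroots := hA.roots_charpoly_eq_eigenvalues
  have hchar : A.charpoly = ∏ i, (Polynomial.X - Polynomial.C (d i : 𝕜)) := by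
    rw [hAd, charpoly_diagonal]
  rw [hchar, Polynomial.roots_prod _ _ (by
    simp [Finset.prod_ne_zero_iff, Polynomial.X_sub_C_ne_zero])] at hroots
  refine Multiset.map_injective (RCLike.ofReal_injective (K := 𝕜)) ?_
  simpa [Multiset.map_map] using hroots.symm

theorem sum_comp_eigenvalues_of_eq_diagonal (hA : A.IsHermitian) {d : n → ℝ}
    (hAd : A = diagonal fun i => (d i : 𝕜)) (f : ℝ → ℝ) :
    ∑ i, f (hA.eigenvalues i) = ∑ i, f (d i) := by
  simpa only [Multiset.map_map, Function.comp_def, ← Finset.sum_eq_multiset_sum] using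
    congrArg (fun s => (s.map f).sum) (hA.map_eigenvalues_of_eq_diagonal hAd)

end Matrix.IsHermitian

theorem nuclearNorm_eq_sum_sqrt_of_conjTranspose_mul_self_eq_diagonal {B C : ℕ}
    {P : Matrix (Fin B) (Fin C) ℝ} {d : Fin C → ℝ} (hd : Pᴴ * P = diagonal d) :
    nuclearNorm P = ∑ c, √(d c) := by
  have hH := (posSemidef_conjTranspose_mul_self P).1
  change (hH.cfc (√·)).trace = _
  rw [hH.trace_cfc]
  exact hH.sum_comp_eigenvalues_of_eq_diagonal hd _

theorem IsOneHot.mul_apply {C : ℕ} {v : Fin C → ℝ} (hv : IsOneHot v) (c d : Fin C) :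
    v c * v d = if c = d then v c else 0 := by
  obtain ⟨k, rfl⟩ := hv
  grind

theorem IsOneHot.sq_apply {C : ℕ} {v : Fin C → ℝ} (hv : IsOneHot v) (c : Fin C) :
    v c ^ 2 = v c := by
  simpa [sq] using hv.mul_apply c c

theorem conjTranspose_mul_self_eq_diagonal_of_isOneHot {B C : ℕ}
    {P : Matrix (Fin B) (Fin C) ℝ} (hP : ∀ i, IsOneHot (P i)) :
    Pᴴ * P = diagonal fun c => ∑ i, P i c := by
  ext c d
  simp only [mul_apply, conjTranspose_apply, star_trivial, (hP _).mul_apply, diagonal_apply]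
  split_ifs <;> simp

theorem natCast_mul_CWS {B C : ℕ} (r : ℝ) (P : Matrix (Fin B) (Fin C) ℝ) :
    C * CWS r P = ∑ c, (∑ i, P i c ^ 2) / (∑ i, P i c) ^ r := by
  rcases eq_or_ne C 0 with rfl | hC
  · simp
  · rw [CWS, ← mul_assoc, mul_one_div_cancel (Nat.cast_ne_zero.mpr hC), one_mul]

theorem stmt_16_general {B C : ℕ} (P : Matrix (Fin B) (Fin C) ℝ)
    (hP : ∀ i, IsOneHot (P i)) :
    nuclearNorm P = C * CWS (1 / 2 : ℝ) P := by
  rw [nuclearNorm_eq_sum_sqrt_of_conjTranspose_mul_self_eq_diagonal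
    (conjTranspose_mul_self_eq_diagonal_of_isOneHot hP), natCast_mul_CWS]
  refine Finset.sum_congr rfl fun c _ => ?_
  simp only [(hP _).sq_apply, ← Real.sqrt_eq_rpow, Real.div_sqrt]

theorem stmt_16 {B C : ℕ} (P : Matrix (Fin B) (Fin C) ℝ)
    (hpos : ∀ i c, 0 ≤ P i c) (hrow : ∀ i, ∑ c, P i c = 1)
    (hP : ∀ i, IsOneHot (P i)) :
    nuclearNorm P = C * CWS (1 / 2 : ℝ) P :=
  stmt_16_general P hP
end
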